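/- Let X be a type, A, T ⊆ X sets with A ∩ T = ∅, and x : ℕ → X a trajectory. Define the auxiliary reach-avoid state b : ℕ → ℕ by b 0 = (if x 0 ∈ A then 1 else if x 0 ∈ T then 2 else 0), and b (k+1) = (if b k = 2 ∨ (b k = 1 ∧ x (k+1) ∈ T) then 2 else if b k = 1 ∧ x (k+1) ∈ A then 1 else 0). Then for every N ∈ ℕ, b N = 2 if and only if there exists k ≤ N such that x i ∈ A for all i < k and x k ∈ T. -/
import Mathlib


open Classical in
theorem reach_avoid_binary_state_iff
    {X : Type*} (A T : Set X) (hAT : A ∩ T = ∅) (x : ℕ → X) (b : ℕ → ℕ)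
    (hb0 : b 0 = if x 0 ∈ A then 1 else if x 0 ∈ T then 2 else 0)
    (hbs : ∀ k, b (k + 1) =
      if b k = 2 ∨ (b k = 1 ∧ x (k + 1) ∈ T) then 2
      else if b k = 1 ∧ x (k + 1) ∈ A then 1 else 0) :
    ∀ N : ℕ, b N = 2 ↔ ∃ k ≤ N, (∀ i < k, x i ∈ A) ∧ x k ∈ T := by
  have hdisj : ∀ y, y ∈ A → y ∉ T := by
    intro y hy hyT
    have : y ∈ A ∩ T := ⟨hy, hyT⟩
    simp [hAT] at this
  have key : ∀ N, (b N = 2 ↔ ∃ k ≤ N, (∀ i < k, x i ∈ A) ∧ x k ∈ T) ∧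
      (b N = 1 ↔ ∀ i ≤ N, x i ∈ A) := by
    intro N
    induction N with
    | zero =>
      constructor
      · constructor
        · intro h
          refine ⟨0, le_refl 0, fun i hi => absurd hi (Nat.not_lt_zero i), ?_⟩
          rw [hb0] at h
          by_cases hA : x 0 ∈ A
          · simp [hA] at h
          · by_cases hT : x 0 ∈ T
            · exact hT
            · simp [hA, hT] at h
        · rintro ⟨k, hk, _, hT⟩
          interval_cases k
          rw [hb0]
          simp [hdisj _ , hT]
          intro hA
          exact absurd hT (hdisj _ hA)
      · constructor
        · intro h
          intro i hi
          interval_cases i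
          rw [hb0] at h
          by_cases hA : x 0 ∈ A
          · exact hA
          · by_cases hT : x 0 ∈ T <;> simp [hA, hT] at h
        · intro h
          rw [hb0]
          simp [h 0 (le_refl 0)]
    | succ N ih =>
      obtain ⟨ih2, ih1⟩ := ih
      have hstep := hbs N
      have h2 : b (N + 1) = 2 ↔ (b N = 2 ∨ (b N = 1 ∧ x (N + 1) ∈ T)) := by
        rw [hstep]
        by_cases hc : b N = 2 ∨ (b N = 1 ∧ x (N + 1) ∈ T)
        · simp [hc]
        · simp [hc]
          by_cases hc1 : b N = 1 ∧ x (N + 1) ∈ A <;> simp [hc1]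
      have h1 : b (N + 1) = 1 ↔ (b N = 1 ∧ x (N + 1) ∈ A) := by
        rw [hstep]
        by_cases hc : b N = 2 ∨ (b N = 1 ∧ x (N + 1) ∈ T)
        · simp [hc]
          rcases hc with hc | ⟨hc, hT⟩
          · intro h; rw [h] at hc; simp at hc
          · intro _ hA; exact hdisj _ hA hT
        · by_cases hc1 : b N = 1 ∧ x (N + 1) ∈ A <;> simp [hc, hc1]
          exact fun hT => hc (Or.inr ⟨hc1.1, hT⟩)
      constructor
      · rw [h2, ih2, ih1]
        constructor
        · rintro (⟨k, hk, hsafe, hT⟩ | ⟨hall, hT⟩)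
          · exact ⟨k, le_trans hk (Nat.le_succ N), hsafe, hT⟩
          · exact ⟨N + 1, le_refl _, fun i hi => hall i (Nat.lt_succ_iff.mp hi), hT⟩
        · rintro ⟨k, hk, hsafe, hT⟩
          rcases Nat.lt_succ_iff_lt_or_eq.mp (Nat.lt_succ_of_le hk) with h | h
          · exact Or.inl ⟨k, Nat.lt_succ_iff.mp h, hsafe, hT⟩
          · subst h
            exact Or.inr ⟨fun i hi => hsafe i (Nat.lt_succ_of_le hi), hT⟩
      · rw [h1, ih1]
        constructor
        · rintro ⟨hall, hA⟩ i hi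
          rcases Nat.le_succ_iff.mp hi with h | h
          · exact hall i h
          · rw [h]; exact hA
        · intro h
          exact ⟨fun i hi => h i (le_trans hi (Nat.le_succ N)), h (N + 1) (le_refl _)⟩
  intro N
  exact (key N).1
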